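/- arXiv:2105.06348 — 3 statements merged into one kernel-verified Lean document; each statement's English description precedes it below -/
import Mathlib

section
/- Let H₁ and H₂ be complex Hilbert spaces, p ∈ (0,2], T : H₁ → H₂ a bounded linear operator, and let (v_j)_{j∈J} and (w_k)_{k∈K} be orthonormal bases of H₁ and H₂, respectively. Then ‖T‖_{𝓛^p(H₁;H₂)}^p ≤ ∑_{j∈J} ‖T v_j‖^p ≤ ∑_{j∈J, k∈K} |⟨T v_j | w_k⟩|^p (all quantities possibly infinite). -/
open scoped ENNReal

noncomputable section

/-- The trace of a (positive) operator on a complex Hilbert space, computed as the sum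
of the diagonal inner products with respect to a (fixed) Hilbert basis, valued in `[0,∞]`. -/
def traceENNReal {H : Type*} [NormedAddCommGroup H] [InnerProductSpace ℂ H] [CompleteSpace H]
    (A : H →L[ℂ] H) : ℝ≥0∞ :=
  ∑' i : (exists_hilbertBasis ℂ H).choose,
    ENNReal.ofReal (inner (𝕜 := ℂ) (A i) (i : H)).re

/-- The Schatten `p`-norm `‖T‖_{𝓛^p} = (tr((T*T)^{p/2}))^{1/p}` of a bounded linear operator
between complex Hilbert spaces, valued in `[0,∞]`; for `p = ∞` it is the operator norm. -/
def schattenNorm {H₁ H₂ : Type*} [NormedAddCommGroup H₁] [InnerProductSpace ℂ H₁]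
    [CompleteSpace H₁] [NormedAddCommGroup H₂] [InnerProductSpace ℂ H₂] [CompleteSpace H₂]
    (p : ℝ≥0∞) (T : H₁ →L[ℂ] H₂) : ℝ≥0∞ :=
  if p = ∞ then (‖T‖₊ : ℝ≥0∞) else
    (traceENNReal (cfc (fun x : ℝ => x ^ (p.toReal / 2)) (ContinuousLinearMap.adjoint T ∘L T)))
      ^ (1 / p.toReal)

/-- Membership in the Schatten class `𝓛^p`: finite Schatten `p`-norm
(for `p = ∞`, all bounded operators). -/
def MemSchatten {H₁ H₂ : Type*} [NormedAddCommGroup H₁] [InnerProductSpace ℂ H₁]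
    [CompleteSpace H₁] [NormedAddCommGroup H₂] [InnerProductSpace ℂ H₂] [CompleteSpace H₂]
    (p : ℝ≥0∞) (T : H₁ →L[ℂ] H₂) : Prop :=
  schattenNorm p T < ∞

/-- Membership in `𝓛^p₀`: for `p < ∞` this is `𝓛^p`, for `p = ∞` the compact operators. -/
def MemSchatten0 {H₁ H₂ : Type*} [NormedAddCommGroup H₁] [InnerProductSpace ℂ H₁]
    [CompleteSpace H₁] [NormedAddCommGroup H₂] [InnerProductSpace ℂ H₂] [CompleteSpace H₂]
    (p : ℝ≥0∞) (T : H₁ →L[ℂ] H₂) : Prop :=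
  if p = ∞ then IsCompactOperator (⇑T) else MemSchatten p T

/-!
Let `q = p/2 ∈ (0,1]`. For `A ≥ 0` the tangent line of the concave function `t ↦ t^q` at `s > 0`,
transported by the functional calculus, gives `A^q ≤ s^q (1 - q) + q s^{q-1} A`; evaluating at a
unit vector `x` and letting `s ↓ ⟨A x, x⟩` yields `⟨A^q x, x⟩ ≤ ⟨A x, x⟩^q`. With `A = T*T` and
`x = v_j` this bounds the diagonal of `(T*T)^q` by `‖T v_j‖^p`. The trace of a positive operator
`S*S` may be computed in any basis, since `∑ ‖S e_i‖² = ∑ ‖S* f_j‖²` for any two bases by Parseval.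
The second inequality is Parseval's identity combined with subadditivity of `t ↦ t^q`.
-/

open scoped InnerProductSpace Topology
open Filter ContinuousLinearMap

theorem ENNReal.rpow_tsum_le_tsum_rpow {ι : Type*} (a : ι → ℝ≥0∞) {q : ℝ} (hq0 : 0 < q)
    (hq1 : q ≤ 1) : (∑' i, a i) ^ q ≤ ∑' i, a i ^ q :=
  le_of_tendsto' ((ENNReal.continuous_rpow_const.tendsto _).comp ENNReal.summable.hasSum)
    fun s => (Finset.le_sum_of_subadditive (· ^ q) (ENNReal.zero_rpow_of_pos hq0).le
      (fun x y => ENNReal.rpow_add_le_add_rpow x y hq0.le hq1) s a).trans (ENNReal.sum_le_tsum s)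

theorem Real.sq_rpow_div_two {r : ℝ} (hr : 0 ≤ r) (p : ℝ) : (r ^ 2) ^ (p / 2) = r ^ p := by
  rw [← Real.rpow_natCast, ← Real.rpow_mul hr]
  ring_nf

section HilbertBasis

variable {𝕜 E F : Type*} [RCLike 𝕜] [NormedAddCommGroup E] [InnerProductSpace 𝕜 E]
  [NormedAddCommGroup F] [InnerProductSpace 𝕜 F] {ι κ : Type*}

theorem HilbertBasis.tsum_ofReal_norm_inner_sq (b : HilbertBasis ι 𝕜 E) (x : E) :
    ∑' i, ENNReal.ofReal (‖⟪x, b i⟫_𝕜‖ ^ 2) = ENNReal.ofReal (‖x‖ ^ 2) := by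
  have h : HasSum (fun i => ‖⟪x, b i⟫_𝕜‖ ^ 2) (‖x‖ ^ 2) := by
    rw [← RCLike.hasSum_ofReal 𝕜]
    convert b.hasSum_inner_mul_inner x x using 1
    · ext i
      rw [← inner_conj_symm x (b i), RCLike.norm_conj, RCLike.conj_mul]
      push_cast
      rfl
    · rw [inner_self_eq_norm_sq_to_K]
      push_cast
      rfl
  rw [← ENNReal.ofReal_tsum_of_nonneg (fun i => by positivity) h.summable, h.tsum_eq]

theorem HilbertBasis.ofReal_norm_rpow_le_tsum (b : HilbertBasis ι 𝕜 E) (x : E) {p : ℝ}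
    (hp0 : 0 < p) (hp2 : p ≤ 2) :
    ENNReal.ofReal (‖x‖ ^ p) ≤ ∑' i, ENNReal.ofReal (‖⟪x, b i⟫_𝕜‖ ^ p) := by
  have hq0 : 0 < p / 2 := by linarith
  simp_rw [← Real.sq_rpow_div_two (norm_nonneg _) p,
    ← ENNReal.ofReal_rpow_of_nonneg (sq_nonneg _) hq0.le, ← b.tsum_ofReal_norm_inner_sq x]
  exact ENNReal.rpow_tsum_le_tsum_rpow _ hq0 (by linarith)

theorem ContinuousLinearMap.tsum_ofReal_norm_apply_sq_eq_adjoint [CompleteSpace E]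
    [CompleteSpace F] (S : E →L[𝕜] F) (e : HilbertBasis ι 𝕜 E) (f : HilbertBasis κ 𝕜 F) :
    ∑' i, ENNReal.ofReal (‖S (e i)‖ ^ 2) = ∑' j, ENNReal.ofReal (‖adjoint S (f j)‖ ^ 2) := by
  simp_rw [← f.tsum_ofReal_norm_inner_sq, ← e.tsum_ofReal_norm_inner_sq]
  rw [ENNReal.tsum_comm]
  refine tsum_congr fun j => tsum_congr fun i => ?_
  rw [adjoint_inner_left, norm_inner_symm]

end HilbertBasis

section Positive

variable {H : Type*} [NormedAddCommGroup H] [InnerProductSpace ℂ H] [CompleteSpace H]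

theorem traceENNReal_eq_tsum_of_nonneg {ι : Type*} {B : H →L[ℂ] H} (hB : 0 ≤ B)
    (e : HilbertBasis ι ℂ H) :
    traceENNReal B = ∑' i, ENNReal.ofReal (⟪B (e i), e i⟫_ℂ).re := by
  obtain ⟨b, hb⟩ := (exists_hilbertBasis ℂ H).choose_spec
  have htrace : traceENNReal B = ∑' k, ENNReal.ofReal (⟪B (b k), b k⟫_ℂ).re := by
    simp [traceENNReal, hb]
  obtain ⟨S, rfl⟩ := CStarAlgebra.nonneg_iff_eq_star_mul_self.mp hB
  have hnorm (x : H) : (⟪(star S * S) x, x⟫_ℂ).re = ‖S x‖ ^ 2 :=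
    (apply_norm_sq_eq_inner_adjoint_left S x).symm
  simp only [htrace, hnorm]
  rw [S.tsum_ofReal_norm_apply_sq_eq_adjoint b e, S.tsum_ofReal_norm_apply_sq_eq_adjoint e e]

theorem re_inner_cfc_rpow_le_rpow_of_le {A : H →L[ℂ] H} (hA : 0 ≤ A) {q : ℝ} (hq0 : 0 < q)
    (hq1 : q ≤ 1) {x : H} (hx : ‖x‖ = 1) {s : ℝ} (hs : 0 < s) (hAs : (⟪A x, x⟫_ℂ).re ≤ s) :
    (⟪cfc (· ^ q : ℝ → ℝ) A x, x⟫_ℂ).re ≤ s ^ q := by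
  have tangent {t : ℝ} (ht : 0 ≤ t) : t ^ q ≤ s ^ q * (1 - q) + s ^ q * q / s * t := by
    calc t ^ q = s ^ q * (1 + (t / s - 1)) ^ q := by
          rw [add_sub_cancel, ← Real.mul_rpow hs.le (by positivity), mul_div_cancel₀ _ hs.ne']
      _ ≤ s ^ q * (1 + q * (t / s - 1)) := by
          gcongr
          exact rpow_one_add_le_one_add_mul_self (by linarith [div_nonneg ht hs.le]) hq0.le hq1
      _ = _ := by field_simp; ring
  have hle : cfc (· ^ q : ℝ → ℝ) A ≤ algebraMap ℝ _ (s ^ q * (1 - q)) + (s ^ q * q / s) • A := by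
    calc cfc (· ^ q : ℝ → ℝ) A ≤ cfc (fun t => s ^ q * (1 - q) + s ^ q * q / s * t) A :=
          cfc_mono (fun t ht => tangent (spectrum_nonneg_of_nonneg hA ht))
            (Real.continuous_rpow_const hq0.le).continuousOn
      _ = _ := by rw [cfc_add .., cfc_const _ A, cfc_const_mul_id _ A]
  have hinner : (⟪cfc (· ^ q : ℝ → ℝ) A x, x⟫_ℂ).re
      ≤ s ^ q * (1 - q) + s ^ q * q / s * (⟪A x, x⟫_ℂ).re := by
    have h := ((le_def _ _).mp hle).re_inner_nonneg_left x
    rw [sub_apply, inner_sub_left, map_sub, add_apply, ContinuousLinearMap.algebraMap_apply,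
      smul_apply, inner_add_left, inner_smul_left_eq_smul, inner_smul_left_eq_smul,
      inner_self_eq_norm_sq_to_K, hx] at h
    simpa using h
  calc _ ≤ s ^ q * (1 - q) + s ^ q * q / s * (⟪A x, x⟫_ℂ).re := hinner
    _ ≤ s ^ q * (1 - q) + s ^ q * q / s * s := by gcongr
    _ = s ^ q := by field_simp; ring

theorem re_inner_cfc_rpow_le {A : H →L[ℂ] H} (hA : 0 ≤ A) {q : ℝ} (hq0 : 0 < q) (hq1 : q ≤ 1)
    {x : H} (hx : ‖x‖ = 1) :
    (⟪cfc (· ^ q : ℝ → ℝ) A x, x⟫_ℂ).re ≤ (⟪A x, x⟫_ℂ).re ^ q := by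
  have ha : 0 ≤ (⟪A x, x⟫_ℂ).re := ((nonneg_iff_isPositive A).mp hA).re_inner_nonneg_left x
  refine ge_of_tendsto ((Real.continuousAt_rpow_const _ q (.inr hq0.le)).tendsto.mono_left
    (nhdsWithin_le_nhds (s := Set.Ioi (⟪A x, x⟫_ℂ).re))) ?_
  filter_upwards [self_mem_nhdsWithin] with s (hs : _ < s)
  exact re_inner_cfc_rpow_le_rpow_of_le hA hq0 hq1 hx (ha.trans_lt hs) hs.le

end Positive

section Schatten

variable {H₁ H₂ : Type*} [NormedAddCommGroup H₁] [InnerProductSpace ℂ H₁] [CompleteSpace H₁]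
  [NormedAddCommGroup H₂] [InnerProductSpace ℂ H₂] [CompleteSpace H₂]

theorem schattenNorm_ofReal_rpow {p : ℝ} (hp : 0 < p) (T : H₁ →L[ℂ] H₂) :
    schattenNorm (ENNReal.ofReal p) T ^ p =
      traceENNReal (cfc (· ^ (p / 2) : ℝ → ℝ) (adjoint T ∘L T)) := by
  rw [schattenNorm, if_neg ENNReal.ofReal_ne_top, ENNReal.toReal_ofReal hp.le,
    ← ENNReal.rpow_mul, one_div, inv_mul_cancel₀ hp.ne', ENNReal.rpow_one]

theorem schattenNorm_rpow_le_tsum {J : Type*} (v : HilbertBasis J ℂ H₁) (T : H₁ →L[ℂ] H₂)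
    {p : ℝ} (hp0 : 0 < p) (hp2 : p ≤ 2) :
    schattenNorm (ENNReal.ofReal p) T ^ p ≤ ∑' j, ENNReal.ofReal (‖T (v j)‖ ^ p) := by
  have hA : 0 ≤ adjoint T ∘L T := (nonneg_iff_isPositive _).mpr (isPositive_adjoint_comp_self T)
  have hB : 0 ≤ cfc (· ^ (p / 2) : ℝ → ℝ) (adjoint T ∘L T) :=
    cfc_nonneg fun t ht => Real.rpow_nonneg (spectrum_nonneg_of_nonneg hA ht) _
  rw [schattenNorm_ofReal_rpow hp0, traceENNReal_eq_tsum_of_nonneg hB v]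
  refine ENNReal.tsum_le_tsum fun j => ENNReal.ofReal_le_ofReal ?_
  calc _ ≤ (⟪(adjoint T ∘L T) (v j), v j⟫_ℂ).re ^ (p / 2) :=
        re_inner_cfc_rpow_le hA (by linarith) (by linarith) (v.orthonormal.1 j)
    _ = ‖T (v j)‖ ^ p := by
        rw [← Real.sq_rpow_div_two (norm_nonneg _), apply_norm_sq_eq_inner_adjoint_left]
        rfl

end Schatten

/-- For `p ∈ (0,2]`, any bounded operator `T : H₁ → H₂` and orthonormal bases
`(v_j)` of `H₁` and `(w_k)` of `H₂`,
`‖T‖_{𝓛^p}^p ≤ ∑_j ‖T v_j‖^p ≤ ∑_{j,k} |⟨T v_j | w_k⟩|^p` (possibly `∞`). -/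
theorem schattenNorm_le_hilbertBasis_sums
    {H₁ H₂ : Type*} [NormedAddCommGroup H₁] [InnerProductSpace ℂ H₁] [CompleteSpace H₁]
    [NormedAddCommGroup H₂] [InnerProductSpace ℂ H₂] [CompleteSpace H₂]
    {J K : Type*} (v : HilbertBasis J ℂ H₁) (w : HilbertBasis K ℂ H₂)
    (T : H₁ →L[ℂ] H₂) {p : ℝ} (hp0 : 0 < p) (hp2 : p ≤ 2) :
    schattenNorm (ENNReal.ofReal p) T ^ p ≤
        (∑' j, ENNReal.ofReal (‖T (v j)‖ ^ p)) ∧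
      (∑' j, ENNReal.ofReal (‖T (v j)‖ ^ p)) ≤
        ∑' (j) (k), ENNReal.ofReal (‖inner (𝕜 := ℂ) (T (v j)) (w k)‖ ^ p) :=
  ⟨schattenNorm_rpow_le_tsum v T hp0 hp2,
    ENNReal.tsum_le_tsum fun j => w.ofReal_norm_rpow_le_tsum (T (v j)) hp0 hp2⟩
end
end

section
/- Let H be a complex Hilbert space and let A, B : H → H be bounded positive self-adjoint operators such that ⟨A x | x⟩ ≤ ⟨B x | x⟩ for every x ∈ H. Then there exists a bounded linear operator C : H → H with ‖C‖ ≤ 1 such that A^{1/2} = C ∘ B^{1/2}, where A^{1/2} and B^{1/2} denote the positive square roots of A and B. -/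
/-!
By Douglas' factorization: `‖A^{1/2} x‖² = ⟪A x, x⟫ ≤ ⟪B x, x⟫ = ‖B^{1/2} x‖²`, so
`B^{1/2} x ↦ A^{1/2} x` is a well-defined contraction on the range of `B^{1/2}`. It extends by
continuity to the closure of that range, and by zero on its orthogonal complement.
-/

open scoped InnerProductSpace

theorem LinearMap.exists_norm_le_one_comp_eq_of_norm_apply_le {𝕜 E F G : Type*} [RCLike 𝕜]
    [AddCommGroup E] [Module 𝕜 E] [NormedAddCommGroup F] [InnerProductSpace 𝕜 F] [CompleteSpace F]
    [NormedAddCommGroup G] [NormedSpace 𝕜 G] [CompleteSpace G]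
    (S : E →ₗ[𝕜] G) (T : E →ₗ[𝕜] F) (h : ∀ x, ‖S x‖ ≤ ‖T x‖) :
    ∃ C : F →L[𝕜] G, ‖C‖ ≤ 1 ∧ ∀ x, C (T x) = S x := by
  set K := (LinearMap.range T).topologicalClosure
  let e : E →ₗ[𝕜] K :=
    T.codRestrict K fun x ↦ (LinearMap.range T).le_topologicalClosure (LinearMap.mem_range_self T x)
  have he_dense : DenseRange e := by
    rw [DenseRange, Subtype.dense_iff, ← Set.range_comp]
    exact (Submodule.topologicalClosure_coe _).subset
  have he_norm : ∀ x, ‖S x‖ ≤ 1 * ‖e x‖ := fun x ↦ (one_mul ‖e x‖).symm ▸ h x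
  refine ⟨S.extendOfNorm e ∘L K.orthogonalProjectionOnto, ?_, fun x ↦ ?_⟩
  · calc ‖S.extendOfNorm e ∘L K.orthogonalProjectionOnto‖
        ≤ ‖S.extendOfNorm e‖ * ‖K.orthogonalProjectionOnto‖ :=
          ContinuousLinearMap.opNorm_comp_le _ _
      _ ≤ 1 * 1 := by
          gcongr
          exacts [opNorm_extendOfNorm_le he_dense zero_le_one he_norm,
            K.orthogonalProjectionOnto_norm_le]
      _ = 1 := one_mul 1
  · have hproj : K.orthogonalProjectionOnto (T x) = e x :=
      K.orthogonalProjectionOnto_mem_subspace_eq_self (e x)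
    rw [ContinuousLinearMap.comp_apply, hproj, extendOfNorm_eq he_dense ⟨1, he_norm⟩]

lemma cfc_sqrt_mul_self {A : Type*} [CStarAlgebra A] [PartialOrder A] [StarOrderedRing A]
    {a : A} (ha : 0 ≤ a) : cfc Real.sqrt a * cfc Real.sqrt a = a := by
  rw [← cfcₙ_eq_cfc, ← CFC.sqrt_eq_real_sqrt a, CFC.sqrt_mul_sqrt_self a]

lemma ContinuousLinearMap.IsPositive.norm_cfc_sqrt_apply_sq {H : Type*} [NormedAddCommGroup H]
    [InnerProductSpace ℂ H] [CompleteSpace H] {A : H →L[ℂ] H} (hA : A.IsPositive) (x : H) :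
    ‖cfc Real.sqrt A x‖ ^ 2 = (⟪A x, x⟫_ℂ).re := by
  have hsa : IsSelfAdjoint (cfc Real.sqrt A) := cfc_predicate Real.sqrt A
  rw [apply_norm_sq_eq_inner_adjoint_left, hsa.adjoint_eq, ← mul_def,
    cfc_sqrt_mul_self ((nonneg_iff_isPositive A).mpr hA)]
  rfl

/-- If `A` and `B` are bounded positive self-adjoint operators on a complex
Hilbert space with `⟨A x | x⟩ ≤ ⟨B x | x⟩` for every `x`, then there is a bounded operator `C`
with `‖C‖ ≤ 1` such that `A^{1/2} = C ∘ B^{1/2}` (square roots via the continuous functional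
calculus). -/
theorem sqrt_eq_contraction_comp_sqrt
    {H : Type*} [NormedAddCommGroup H] [InnerProductSpace ℂ H] [CompleteSpace H]
    (A B : H →L[ℂ] H) (hA : A.IsPositive) (hB : B.IsPositive)
    (hAB : ∀ x : H, (inner (𝕜 := ℂ) (A x) x).re ≤ (inner (𝕜 := ℂ) (B x) x).re) :
    ∃ C : H →L[ℂ] H, ‖C‖ ≤ 1 ∧ cfc Real.sqrt A = C ∘L cfc Real.sqrt B := by
  have hle : ∀ x, ‖cfc Real.sqrt A x‖ ≤ ‖cfc Real.sqrt B x‖ := fun x ↦ by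
    rw [← sq_le_sq₀ (norm_nonneg _) (norm_nonneg _), hA.norm_cfc_sqrt_apply_sq,
      hB.norm_cfc_sqrt_apply_sq]
    exact hAB x
  obtain ⟨C, hC, hCB⟩ := LinearMap.exists_norm_le_one_comp_eq_of_norm_apply_le
    (cfc Real.sqrt A : H →L[ℂ] H).toLinearMap (cfc Real.sqrt B : H →L[ℂ] H).toLinearMap hle
  exact ⟨C, hC, ContinuousLinearMap.ext fun x ↦ (hCB x).symm⟩
end

section
/- Let J and K be countable index sets, let p₁, q₁, p₂, q₂ ∈ (0,∞], and set p₃ := ((1/p₂ − 1/p₁)₊)^{-1} and q₃ := ((1/q₂ − 1/q₁)₊)^{-1} (so p₃ = ∞ when p₁ ≤ p₂, and 1/p₃ = 1/p₂ − 1/p₁ otherwise, similarly for q₃). If μ ∈ ℓ^{p₃,q₃}(J,K), then the pointwise multiplication operator M_μ : λ ↦ μ·λ maps ℓ^{p₁,q₁}(J,K) into ℓ^{p₂,q₂}(J,K) with ‖μ·λ‖_{ℓ^{p₂,q₂}(J,K)} ≤ ‖μ‖_{ℓ^{p₃,q₃}(J,K)} ‖λ‖_{ℓ^{p₁,q₁}(J,K)};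 if moreover μ ∈ ℓ^{p₃,q₃}₀(J,K), then M_μ : ℓ^{p₁,q₁}(J,K) → ℓ^{p₂,q₂}(J,K) is a compact linear operator, being a limit in operator norm of the finite-rank operators λ ↦ (χ_Y μ)·λ with Y a finite subset of J×K. -/
/-!
Row by row, Hölder's inequality in `ℓ^p(J)` bounds the `ℓ^{p₂}` norm of `μ · λ` by the product of
the `ℓ^{p₃}` norm of `μ` and the `ℓ^{p₁}` norm of `λ`; a second application in `ℓ^q(K)` gives the
mixed bound. When `p₁ ≤ p₂` (so `p₃ = ∞`) the Hölder step is the sup bound followed by the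
embedding `ℓ^{p₁} ⊆ ℓ^{p₂}`. For compactness, if `ν` is finitely supported with
`‖μ - ν‖ < ε`, then `μ` truncated to the complement of the support of `ν` is dominated pointwise
by `|μ - ν|`, so the bound gives the truncated multiplier norm at most `ε`.
-/

open scoped ENNReal

noncomputable section

/-- The `ℓ^p` norm (valued in `[0,∞]`) of a `[0,∞]`-valued family, `p ∈ (0,∞]`. -/
def ennLpNorm (p : ℝ≥0∞) {ι : Type*} (f : ι → ℝ≥0∞) : ℝ≥0∞ :=
  if p = ∞ then ⨆ i, f i else (∑' i, f i ^ p.toReal) ^ (1 / p.toReal)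

/-- The mixed `ℓ^{p,q}(J,K)` (quasi-)norm of `λ : J × K → ℂ`: the `ℓ^q` norm over `k ∈ K` of
the `ℓ^p` norms over `j ∈ J`. -/
def mixedLpqNorm (p q : ℝ≥0∞) {J K : Type*} (l : J × K → ℂ) : ℝ≥0∞ :=
  ennLpNorm q fun k => ennLpNorm p fun j => (‖l (j, k)‖₊ : ℝ≥0∞)

/-- Membership in `ℓ^{p,q}(J,K)`. -/
def MemLpq (p q : ℝ≥0∞) {J K : Type*} (l : J × K → ℂ) : Prop :=
  mixedLpqNorm p q l < ∞

/-- Membership in `ℓ^{p,q}₀(J,K)`: the closure in `ℓ^{p,q}(J,K)` of the finitely supported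
functions. -/
def MemLpq0 (p q : ℝ≥0∞) {J K : Type*} (l : J × K → ℂ) : Prop :=
  MemLpq p q l ∧ ∀ ε : ℝ≥0∞, 0 < ε → ∃ l₀ : J × K → ℂ,
    (Function.support l₀).Finite ∧ mixedLpqNorm p q (l - l₀) < ε

open Classical

open MeasureTheory

theorem ENNReal.Lr_le_Lp_mul_Lq_tsum {ι : Type*} {f g : ι → ℝ≥0∞} {p q r : ℝ}
    (hpqr : p.HolderTriple q r) :
    (∑' i, (f i * g i) ^ r) ^ (1 / r) ≤ (∑' i, f i ^ p) ^ (1 / p) * (∑' i, g i ^ q) ^ (1 / q) := by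
  let : MeasurableSpace ι := ⊤
  simpa only [lintegral_count, Pi.mul_apply] using
    lintegral_Lp_mul_le_Lq_mul_Lr hpqr.pos' hpqr.lt hpqr.one_div_eq (Measure.count : Measure ι)
      (f := f) (g := g) measurable_from_top.aemeasurable measurable_from_top.aemeasurable

section ennLpNorm

open ENNReal

variable {ι : Type*} {p q r : ℝ≥0∞}

theorem ennLpNorm_top (f : ι → ℝ≥0∞) : ennLpNorm ∞ f = ⨆ i, f i := if_pos rfl

theorem ennLpNorm_of_ne_top (hp : p ≠ ∞) (f : ι → ℝ≥0∞) :
    ennLpNorm p f = (∑' i, f i ^ p.toReal) ^ (1 / p.toReal) := if_neg hp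

@[gcongr]
theorem ennLpNorm_mono (p : ℝ≥0∞) {f g : ι → ℝ≥0∞} (h : f ≤ g) :
    ennLpNorm p f ≤ ennLpNorm p g := by
  rcases eq_or_ne p ∞ with rfl | hp
  · simpa only [ennLpNorm_top] using iSup_mono h
  · simp only [ennLpNorm_of_ne_top hp]
    gcongr with i
    exact h i

theorem le_ennLpNorm (hp : p ≠ 0) (f : ι → ℝ≥0∞) (i : ι) : f i ≤ ennLpNorm p f := by
  rcases eq_or_ne p ∞ with rfl | hp'
  · rw [ennLpNorm_top]
    exact le_iSup f i
  · rw [ennLpNorm_of_ne_top hp', one_div, le_rpow_inv_iff (toReal_pos hp hp')]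
    exact ENNReal.le_tsum i

theorem ennLpNorm_anti_exponent (hp : p ≠ 0) (hpq : p ≤ q) (f : ι → ℝ≥0∞) :
    ennLpNorm q f ≤ ennLpNorm p f := by
  rcases eq_or_ne q ∞ with rfl | hq
  · rw [ennLpNorm_top]
    exact iSup_le (le_ennLpNorm hp f)
  have hp' : 0 < p.toReal := toReal_pos hp (ne_top_of_le_ne_top hq hpq)
  have hqp : 0 ≤ q.toReal - p.toReal := sub_nonneg.2 (toReal_mono hq hpq)
  have hS : ennLpNorm p f ^ p.toReal = ∑' i, f i ^ p.toReal := by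
    rw [ennLpNorm_of_ne_top (ne_top_of_le_ne_top hq hpq), one_div, rpow_inv_rpow hp'.ne']
  set S := ennLpNorm p f
  -- `f i ^ q = f i ^ p * f i ^ (q - p)`, and `f i ≤ S` bounds the second factor.
  have key : ∑' i, f i ^ q.toReal ≤ S ^ q.toReal := calc
    ∑' i, f i ^ q.toReal = ∑' i, f i ^ p.toReal * f i ^ (q.toReal - p.toReal) := by
      congr with i
      rw [← rpow_add_of_nonneg _ _ hp'.le hqp, add_sub_cancel]
    _ ≤ ∑' i, f i ^ p.toReal * S ^ (q.toReal - p.toReal) := by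
      gcongr with i
      exact le_ennLpNorm hp f i
    _ = S ^ q.toReal := by
      rw [ENNReal.tsum_mul_right, ← hS, ← rpow_add_of_nonneg _ _ hp'.le hqp, add_sub_cancel]
  rw [ennLpNorm_of_ne_top hq, one_div, rpow_inv_le_iff (hp'.trans_le (toReal_mono hq hpq))]
  exact key

theorem ennLpNorm_mul_le_iSup_mul (hp : p ≠ 0) (f g : ι → ℝ≥0∞) :
    ennLpNorm p (f * g) ≤ (⨆ i, f i) * ennLpNorm p g := by
  rcases eq_or_ne p ∞ with rfl | hp'
  · simp only [ennLpNorm_top, Pi.mul_apply]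
    exact iSup_le fun i => mul_le_mul' (le_iSup f i) (le_iSup g i)
  have hpr : 0 < p.toReal := toReal_pos hp hp'
  simp only [ennLpNorm_of_ne_top hp', Pi.mul_apply]
  calc (∑' i, (f i * g i) ^ p.toReal) ^ (1 / p.toReal)
      ≤ (∑' i, (⨆ j, f j) ^ p.toReal * g i ^ p.toReal) ^ (1 / p.toReal) := by
        gcongr with i
        rw [← mul_rpow_of_nonneg _ _ hpr.le]
        gcongr
        exact le_iSup f i
    _ = (⨆ j, f j) * (∑' i, g i ^ p.toReal) ^ (1 / p.toReal) := by
        rw [ENNReal.tsum_mul_left, mul_rpow_of_nonneg _ _ (by positivity), ← rpow_mul,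
          mul_one_div_cancel hpr.ne', rpow_one]

theorem ennLpNorm_mul_le_mul_ennLpNorm [hpqr : p.HolderTriple q r] (hr : r ≠ 0)
    (f g : ι → ℝ≥0∞) : ennLpNorm r (f * g) ≤ ennLpNorm p f * ennLpNorm q g := by
  have hp : p ≠ 0 := ne_bot_of_le_ne_bot hr (HolderTriple.le p q r)
  have hq : q ≠ 0 := ne_bot_of_le_ne_bot hr (HolderTriple.le q p r)
  rcases eq_or_ne p ∞ with rfl | hp'
  · obtain rfl : r = q := HolderTriple.unique ∞ q r q
    rw [ennLpNorm_top]
    exact ennLpNorm_mul_le_iSup_mul hr f g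
  rcases eq_or_ne q ∞ with rfl | hq'
  · obtain rfl : r = p := HolderTriple.unique p ∞ r p
    rw [ennLpNorm_top, mul_comm f, mul_comm (ennLpNorm r f)]
    exact ennLpNorm_mul_le_iSup_mul hr g f
  have hr' : r ≠ ∞ := ne_top_of_le_ne_top hp' (HolderTriple.le p q r)
  rw [ennLpNorm_of_ne_top hr', ennLpNorm_of_ne_top hp', ennLpNorm_of_ne_top hq']
  exact Lr_le_Lp_mul_Lq_tsum
    ((HolderTriple.toReal_iff r (toReal_pos hp hp') (toReal_pos hq hq')).2 hpqr)

-- The subtraction is truncated, so the exponent `(1 / p₂ - 1 / p₁)⁻¹` is `∞` when `p₁ ≤ p₂`.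
theorem ennLpNorm_mul_le {p₁ p₂ : ℝ≥0∞} (hp₁ : p₁ ≠ 0) (hp₂ : p₂ ≠ 0) (f g : ι → ℝ≥0∞) :
    ennLpNorm p₂ (f * g) ≤ ennLpNorm (1 / p₂ - 1 / p₁)⁻¹ f * ennLpNorm p₁ g := by
  rcases le_total p₁ p₂ with h | h
  · have : (1 / p₂ - 1 / p₁)⁻¹ = ∞ := by
      simpa only [inv_eq_top, tsub_eq_zero_iff_le, one_div] using ENNReal.inv_le_inv.2 h
    rw [this]
    calc ennLpNorm p₂ (f * g) ≤ ennLpNorm ∞ f * ennLpNorm p₂ g :=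
          ennLpNorm_mul_le_mul_ennLpNorm hp₂ f g
      _ ≤ ennLpNorm ∞ f * ennLpNorm p₁ g := by gcongr; exact ennLpNorm_anti_exponent hp₁ h g
  · have : (1 / p₂ - 1 / p₁)⁻¹.HolderTriple p₁ p₂ := ⟨by
      rw [inv_inv, one_div, one_div, tsub_add_cancel_of_le (ENNReal.inv_le_inv.2 h)]⟩
    exact ennLpNorm_mul_le_mul_ennLpNorm hp₂ f g

end ennLpNorm

section mixedLpqNorm

variable {J K : Type*}

theorem mixedLpqNorm_mono (p q : ℝ≥0∞) {f g : J × K → ℂ} (h : ∀ x, ‖f x‖₊ ≤ ‖g x‖₊) :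
    mixedLpqNorm p q f ≤ mixedLpqNorm p q g :=
  ennLpNorm_mono q fun k => ennLpNorm_mono p fun j => ENNReal.coe_le_coe.2 (h (j, k))

theorem mixedLpqNorm_mul_le {p₁ q₁ p₂ q₂ : ℝ≥0∞} (hp₁ : p₁ ≠ 0) (hq₁ : q₁ ≠ 0) (hp₂ : p₂ ≠ 0)
    (hq₂ : q₂ ≠ 0) (μ l : J × K → ℂ) :
    mixedLpqNorm p₂ q₂ (μ * l) ≤
      mixedLpqNorm (1 / p₂ - 1 / p₁)⁻¹ (1 / q₂ - 1 / q₁)⁻¹ μ * mixedLpqNorm p₁ q₁ l := by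
  refine le_trans (ennLpNorm_mono q₂ fun k => ?_) (ennLpNorm_mul_le hq₁ hq₂ _ _)
  simp only [Pi.mul_apply, nnnorm_mul, ENNReal.coe_mul]
  exact ennLpNorm_mul_le hp₁ hp₂ _ _

theorem mixedLpqNorm_ite_le_sub [DecidableEq (J × K)] (p q : ℝ≥0∞) (μ ν : J × K → ℂ)
    (hν : (Function.support ν).Finite) :
    mixedLpqNorm p q (fun x => if x ∈ hν.toFinset then 0 else μ x) ≤ mixedLpqNorm p q (μ - ν) := by
  refine mixedLpqNorm_mono p q fun x => ?_
  by_cases hx : x ∈ hν.toFinset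
  · simp [hx]
  · simp [hx, Function.notMem_support.1 (hν.mem_toFinset.not.1 hx)]

end mixedLpqNorm

theorem mixed_multiplier_bounded_and_compact_general
    {J K : Type*}
    {p₁ q₁ p₂ q₂ : ℝ≥0∞} (hp₁ : 0 < p₁) (hq₁ : 0 < q₁) (hp₂ : 0 < p₂) (hq₂ : 0 < q₂)
    (μ : J × K → ℂ) (hμ : MemLpq (1 / p₂ - 1 / p₁)⁻¹ (1 / q₂ - 1 / q₁)⁻¹ μ) :
    (∀ l : J × K → ℂ,
      mixedLpqNorm p₂ q₂ (fun x => μ x * l x) ≤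
        mixedLpqNorm (1 / p₂ - 1 / p₁)⁻¹ (1 / q₂ - 1 / q₁)⁻¹ μ * mixedLpqNorm p₁ q₁ l) ∧
    (∀ l : J × K → ℂ, MemLpq p₁ q₁ l → MemLpq p₂ q₂ (fun x => μ x * l x)) ∧
    (MemLpq0 (1 / p₂ - 1 / p₁)⁻¹ (1 / q₂ - 1 / q₁)⁻¹ μ →
      ∀ ε : ℝ≥0∞, 0 < ε → ∃ Y : Finset (J × K),
        ∀ l : J × K → ℂ,
          mixedLpqNorm p₂ q₂ (fun x => (if x ∈ Y then 0 else μ x) * l x) ≤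
            ε * mixedLpqNorm p₁ q₁ l) := by
  have hmul := mixedLpqNorm_mul_le hp₁.ne' hq₁.ne' hp₂.ne' hq₂.ne' (J := J) (K := K)
  refine ⟨hmul μ, fun l hl => (hmul μ l).trans_lt (ENNReal.mul_lt_top hμ hl), fun hμ₀ ε hε => ?_⟩
  obtain ⟨ν, hν, hμν⟩ := hμ₀.2 ε hε
  refine ⟨hν.toFinset, fun l => ?_⟩
  calc _ ≤ _ * mixedLpqNorm p₁ q₁ l := hmul _ l
    _ ≤ mixedLpqNorm (1 / p₂ - 1 / p₁)⁻¹ (1 / q₂ - 1 / q₁)⁻¹ (μ - ν) * mixedLpqNorm p₁ q₁ l := by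
      gcongr
      exact mixedLpqNorm_ite_le_sub _ _ μ ν hν
    _ ≤ ε * mixedLpqNorm p₁ q₁ l := by gcongr

/-- Let `J, K` be countable, `p₁, q₁, p₂, q₂ ∈ (0,∞]`, and let
`p₃ = ((1/p₂ − 1/p₁)₊)⁻¹`, `q₃ = ((1/q₂ − 1/q₁)₊)⁻¹`. If `μ ∈ ℓ^{p₃,q₃}(J,K)`, then pointwise
multiplication by `μ` maps `ℓ^{p₁,q₁}(J,K)` into `ℓ^{p₂,q₂}(J,K)` with
`‖μ·λ‖_{ℓ^{p₂,q₂}} ≤ ‖μ‖_{ℓ^{p₃,q₃}} ‖λ‖_{ℓ^{p₁,q₁}}`; and if moreover `μ ∈ ℓ^{p₃,q₃}₀(J,K)`,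
then `M_μ` is a compact operator, being the operator-norm limit of its finite-rank truncations
`λ ↦ (χ_Y μ)·λ` over finite sets `Y ⊆ J × K`. -/
theorem mixed_multiplier_bounded_and_compact
    {J K : Type*} [Countable J] [Countable K]
    {p₁ q₁ p₂ q₂ : ℝ≥0∞} (hp₁ : 0 < p₁) (hq₁ : 0 < q₁) (hp₂ : 0 < p₂) (hq₂ : 0 < q₂)
    (μ : J × K → ℂ) (hμ : MemLpq (1 / p₂ - 1 / p₁)⁻¹ (1 / q₂ - 1 / q₁)⁻¹ μ) :
    (∀ l : J × K → ℂ,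
      mixedLpqNorm p₂ q₂ (fun x => μ x * l x) ≤
        mixedLpqNorm (1 / p₂ - 1 / p₁)⁻¹ (1 / q₂ - 1 / q₁)⁻¹ μ * mixedLpqNorm p₁ q₁ l) ∧
    (∀ l : J × K → ℂ, MemLpq p₁ q₁ l → MemLpq p₂ q₂ (fun x => μ x * l x)) ∧
    (MemLpq0 (1 / p₂ - 1 / p₁)⁻¹ (1 / q₂ - 1 / q₁)⁻¹ μ →
      ∀ ε : ℝ≥0∞, 0 < ε → ∃ Y : Finset (J × K),
        ∀ l : J × K → ℂ,
          mixedLpqNorm p₂ q₂ (fun x => (if x ∈ Y then 0 else μ x) * l x) ≤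
            ε * mixedLpqNorm p₁ q₁ l) :=
  mixed_multiplier_bounded_and_compact_general hp₁ hq₁ hp₂ hq₂ μ hμ
end
end
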